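/- Let α > 2, r = ⌈α⌉, s ≥ 3 and t positive integers with μ^s(0) = x00y, |x| = t, and 2 < r − t/2^s < α. Suppose 00v ∈ 𝓛 and 00v contains a factor of period p which is a β-power (length/period = β). Then δ^t μ^s(0^r v) contains a factor of period 2^s·p which is a β-power. -/

import Mathlib

/-- Thue–Morse morphism: 0 ↦ 01, 1 ↦ 10 (false = 0, true = 1). -/
def mu : List Bool → List Bool :=
  fun w => w.flatMap (fun b => if b then [true, false] else [false, true])

/-- `w` has period `p`: `w[i] = w[i+p]` whenever both defined. -/
def HasPeriod (w : List Bool) (p : ℕ) : Prop :=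
  ∀ i, i + p < w.length → w[i]? = w[i + p]?

/-- `w` is α-power-free: no factor `u` has a period `p` with `|u|/p ≥ α`. -/
def PowerFree (α : ℝ) (w : List Bool) : Prop :=
  ∀ u p, u <:+: w → 0 < p → HasPeriod u p → (u.length : ℝ) / p < α

/-- `𝓛`: factors of images of `mu`. -/
def InL (w : List Bool) : Prop := ∃ x, w <:+: mu x

/-
The word `μ^s(u)` does the job. Its period `2^s p` and exponent `|u|/p` come from `μ` being
`2`-uniform. For the factor condition, `r ≥ 3` (forced by `2 < r - t/2^s`) lets us write
`0^r v = 0 · 0^(r-3) · 00v`; deleting `x` from `μ^s(0) = x00y` leaves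
`00y μ^s(0^(r-3)) μ^s(00v)`, which ends in `μ^s(00v)` and so contains `μ^s(u)`.
-/

lemma mu_append (a b : List Bool) : mu (a ++ b) = mu a ++ mu b :=
  List.flatMap_append

lemma mu_cons (a : Bool) (w : List Bool) :
    mu (a :: w) = (if a then [true, false] else [false, true]) ++ mu w :=
  List.flatMap_cons

lemma length_mu (w : List Bool) : (mu w).length = 2 * w.length := by
  induction w with
  | nil => rfl
  | cons a w ih => cases a <;> simp [mu_cons, ih] <;> ring

lemma drop_mu (w : List Bool) (p : ℕ) : (mu w).drop (2 * p) = mu (w.drop p) := by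
  induction w generalizing p with
  | nil => simp [mu]
  | cons a w ih =>
    cases p with
    | zero => rfl
    | succ p => cases a <;> simp [mu_cons, Nat.mul_succ, ih]

lemma List.IsInfix.mu {u w : List Bool} (h : u <:+: w) : mu u <:+: mu w := by
  obtain ⟨a, b, rfl⟩ := h
  exact ⟨_root_.mu a, _root_.mu b, by rw [mu_append, mu_append]⟩

lemma hasPeriod_iff_drop_prefix (w : List Bool) (p : ℕ) :
    HasPeriod w p ↔ w.drop p <+: w := by
  constructor
  · intro h
    rw [List.prefix_iff_eq_take]
    refine List.ext_getElem? fun n => ?_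
    rw [List.getElem?_drop, List.getElem?_take, List.length_drop]
    by_cases hn : n < w.length - p
    · rw [if_pos hn, Nat.add_comm p n, ← h n (by omega)]
    · rw [if_neg hn, List.getElem?_eq_none (by omega)]
  · rintro ⟨c, hc⟩ i hi
    conv_lhs => rw [← hc]
    rw [List.getElem?_append, List.length_drop, if_pos (by omega), List.getElem?_drop,
      Nat.add_comm]

lemma HasPeriod.mu {w : List Bool} {p : ℕ} (h : HasPeriod w p) : HasPeriod (mu w) (2 * p) := by
  rw [hasPeriod_iff_drop_prefix] at h ⊢
  obtain ⟨c, hc⟩ := h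
  exact ⟨_root_.mu c, by rw [drop_mu, ← mu_append, hc]⟩

section Iterate

variable (s : ℕ)

lemma iterate_mu_append (a b : List Bool) : mu^[s] (a ++ b) = mu^[s] a ++ mu^[s] b := by
  induction s with
  | zero => rfl
  | succ n ih => simp only [Function.iterate_succ_apply', ih, mu_append]

lemma length_iterate_mu (w : List Bool) : (mu^[s] w).length = 2 ^ s * w.length := by
  induction s with
  | zero => simp
  | succ n ih => rw [Function.iterate_succ_apply', length_mu, ih, pow_succ]; ring

lemma List.IsInfix.iterate_mu {u w : List Bool} (h : u <:+: w) :
    _root_.mu^[s] u <:+: _root_.mu^[s] w := by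
  induction s with
  | zero => exact h
  | succ n ih => simpa only [Function.iterate_succ_apply'] using ih.mu

lemma HasPeriod.iterate_mu {w : List Bool} {p : ℕ} (h : HasPeriod w p) :
    HasPeriod (_root_.mu^[s] w) (2 ^ s * p) := by
  induction s with
  | zero => simpa using h
  | succ n ih =>
    rw [Function.iterate_succ_apply', pow_succ, mul_comm _ 2, mul_assoc]
    exact ih.mu

lemma drop_iterate_mu_cons {a : Bool} {x z : List Bool} (hx : mu^[s] [a] = x ++ z)
    (w : List Bool) : (mu^[s] (a :: w)).drop x.length = z ++ mu^[s] w := by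
  rw [← List.singleton_append, iterate_mu_append, hx, List.append_assoc, List.drop_left]

lemma iterate_mu_infix_drop_iterate_mu_replicate {x y : List Bool}
    (hx : mu^[s] [false] = x ++ [false, false] ++ y) {r : ℕ} (hr : 3 ≤ r) (v : List Bool) :
    mu^[s] ([false, false] ++ v) <:+:
      (mu^[s] (List.replicate r false ++ v)).drop x.length := by
  have hsplit : List.replicate r false ++ v =
      false :: (List.replicate (r - 3) false ++ ([false, false] ++ v)) := by
    obtain ⟨k, rfl⟩ : ∃ k, r = 1 + k + 2 := ⟨r - 3, by omega⟩
    simp [List.replicate_add]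
  rw [List.append_assoc] at hx
  rw [hsplit, drop_iterate_mu_cons s hx, iterate_mu_append s (List.replicate _ _),
    ← List.append_assoc]
  exact (List.suffix_append _ _).isInfix

end Iterate

theorem lemma5_part2_general (r s t : ℕ) (x y : List Bool)
    (hx : mu^[s] [false] = x ++ [false, false] ++ y) (hxt : x.length = t)
    (hβ1 : 2 < (r : ℝ) - t / 2 ^ s)
    (v : List Bool)
    (β : ℝ) (u : List Bool) (p : ℕ)
    (hu : u <:+: ([false, false] ++ v)) (hper : HasPeriod u p)
    (hexp : (u.length : ℝ) / p = β) :
    ∃ u' : List Bool, u' <:+: (mu^[s] (List.replicate r false ++ v)).drop t ∧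
      HasPeriod u' (2 ^ s * p) ∧ (u'.length : ℝ) / (2 ^ s * p) = β := by
  have hr : 3 ≤ r := by
    have : (2 : ℝ) < r := hβ1.trans_le (sub_le_self _ (by positivity))
    exact_mod_cast this
  refine ⟨mu^[s] u, ?_, HasPeriod.iterate_mu s hper, ?_⟩
  · rw [← hxt]
    exact (List.IsInfix.iterate_mu s hu).trans
      (iterate_mu_infix_drop_iterate_mu_replicate s hx hr v)
  · rw [length_iterate_mu, ← hexp, Nat.cast_mul, Nat.cast_pow, Nat.cast_ofNat,
      mul_div_mul_left _ _ (by positivity)]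

theorem lemma5_part2 (α : ℝ) (hα : 2 < α) (r s t : ℕ) (hr : r = ⌈α⌉₊)
    (hs : 3 ≤ s) (ht : 0 < t) (x y : List Bool)
    (hx : mu^[s] [false] = x ++ [false, false] ++ y) (hxt : x.length = t)
    (hβ1 : 2 < (r : ℝ) - t / 2 ^ s) (hβ2 : (r : ℝ) - t / 2 ^ s < α)
    (v : List Bool) (hL : InL ([false, false] ++ v))
    (β : ℝ) (u : List Bool) (p : ℕ) (hp : 0 < p)
    (hu : u <:+: ([false, false] ++ v)) (hper : HasPeriod u p)
    (hexp : (u.length : ℝ) / p = β) :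
    ∃ u' : List Bool, u' <:+: (mu^[s] (List.replicate r false ++ v)).drop t ∧
      HasPeriod u' (2 ^ s * p) ∧ (u'.length : ℝ) / (2 ^ s * p) = β :=
  lemma5_part2_general r s t x y hx hxt hβ1 v β u p hu hper hexp
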